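/- arXiv:math/0512106 — 5 statements merged into one kernel-verified Lean document; each statement's English description precedes it below -/
import Mathlib

section
/- For a crossed module [φ : G₂ → G₁], the inclusion G₁ → G₁ ⋊ G₂, g ↦ (g, 1), together with s and t, makes the associated groupoid (objects G₁, arrows G₁ ⋊ G₂) into a group object in the category of groupoids: the group multiplications on objects and arrows are functorial with respect to the groupoid structure. -/
/-- A crossed module `[φ : G₂ → G₁]`: a group homomorphism `φ` together with a
right action of `G₁` on `G₂` (written `act β a` for `β^a`) satisfying
(CM1) `β^{φ α} = α⁻¹ β α` and (CM2) `φ (β^a) = a⁻¹ (φ β) a`. -/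
structure CrossedModule (G₁ G₂ : Type*) [Group G₁] [Group G₂] where
  φ : G₂ →* G₁
  act : G₂ → G₁ → G₂
  act_one : ∀ β : G₂, act β 1 = β
  act_mul : ∀ (β : G₂) (a b : G₁), act β (a * b) = act (act β a) b
  mul_act : ∀ (α β : G₂) (a : G₁), act (α * β) a = act α a * act β a
  cm1 : ∀ α β : G₂, act β (φ α) = α⁻¹ * β * α
  cm2 : ∀ (β : G₂) (a : G₁), φ (act β a) = a⁻¹ * φ β * a

/-- The semidirect product multiplication `(g, α)(h, β) = (gh, α^h β)` on `G₁ × G₂`. -/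
def sdMul {G₁ G₂ : Type*} [Group G₁] [Group G₂] (M : CrossedModule G₁ G₂)
    (p q : G₁ × G₂) : G₁ × G₂ :=
  (p.1 * q.1, M.act p.2 q.1 * q.2)

/-!
The target map is multiplicative because (CM2) makes `φ` equivariant, `h φ(α^h) = φ(α) h`.
For the interchange law, the second component of `(gφα, β)(hφγ, δ)` contains `β^{hφγ}`,
which (CM1) rewrites as `γ⁻¹ β^h γ`; the conjugation by `γ` cancels against the `γ`
coming from `(g, α)(h, γ)`, leaving `α^h β^h γ δ = (αβ)^h (γδ)`.
-/

namespace CrossedModule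

variable {G₁ G₂ : Type*} [Group G₁] [Group G₂] (M : CrossedModule G₁ G₂)

lemma one_act (a : G₁) : M.act 1 a = 1 := by
  have h := M.mul_act 1 1 a
  rw [mul_one] at h
  exact mul_eq_left.mp h.symm

lemma mul_φ_act (β : G₂) (a : G₁) : a * M.φ (M.act β a) = M.φ β * a := by
  rw [M.cm2]
  group

lemma act_mul_φ (β γ : G₂) (a : G₁) : M.act β (a * M.φ γ) = γ⁻¹ * M.act β a * γ := by
  rw [M.act_mul, M.cm1]

lemma sdMul_tgt (p q : G₁ × G₂) :
    (sdMul M p q).1 * M.φ (sdMul M p q).2 = (p.1 * M.φ p.2) * (q.1 * M.φ q.2) := by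
  calc p.1 * q.1 * M.φ (M.act p.2 q.1 * q.2)
      = p.1 * (q.1 * M.φ (M.act p.2 q.1)) * M.φ q.2 := by rw [map_mul]; group
    _ = p.1 * M.φ p.2 * (q.1 * M.φ q.2) := by rw [mul_φ_act]; group

lemma sdMul_one_one (g h : G₁) : sdMul M (g, 1) (h, 1) = (g * h, 1) := by
  simp only [sdMul, one_act, mul_one]

lemma sdMul_interchange (g h : G₁) (α β γ δ : G₂) :
    sdMul M (g, α * β) (h, γ * δ)
      = ((sdMul M (g, α) (h, γ)).1,
          (sdMul M (g, α) (h, γ)).2 * (sdMul M (g * M.φ α, β) (h * M.φ γ, δ)).2) := by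
  simp only [sdMul, Prod.mk.injEq, true_and, mul_act, act_mul_φ]
  group

end CrossedModule

/-- for a crossed module, the associated groupoid (objects `G₁`,
arrows `G₁ ⋊ G₂`, `s (g,α) = g`, `t (g,α) = g φ α`, identity `g ↦ (g,1)`,
composition of `(g,α)` and `(gφα,β)` equal to `(g,αβ)`) is a group object in
groupoids: `s` and `t` are group homomorphisms, the identity-assigning map is a
group homomorphism, and group multiplication of arrows commutes with composition
(interchange law). -/
theorem crossedModule_groupObject {G₁ G₂ : Type*} [Group G₁] [Group G₂]
    (M : CrossedModule G₁ G₂) :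
    -- s is a group homomorphism
    (∀ p q : G₁ × G₂, (sdMul M p q).1 = p.1 * q.1) ∧
    -- t is a group homomorphism
    (∀ p q : G₁ × G₂,
      (sdMul M p q).1 * M.φ (sdMul M p q).2 = (p.1 * M.φ p.2) * (q.1 * M.φ q.2)) ∧
    -- g ↦ (g, 1) is a group homomorphism: (g,1)(h,1) = (gh,1)
    (∀ g h : G₁, sdMul M (g, 1) (h, 1) = (g * h, 1)) ∧
    -- interchange: the product of the composites of the composable pairs
    -- ((g,α), (gφα,β)) and ((h,γ), (hφγ,δ)), namely (g,αβ)(h,γδ), equals the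
    -- composite of the products (g,α)(h,γ) and (gφα,β)(hφγ,δ); first, the
    -- products are again composable:
    (∀ (g h : G₁) (α γ : G₂),
      (sdMul M (g, α) (h, γ)).1 * M.φ (sdMul M (g, α) (h, γ)).2
        = (sdMul M (g * M.φ α, 1) (h * M.φ γ, 1)).1) ∧
    -- ... and the interchange law holds:
    (∀ (g h : G₁) (α β γ δ : G₂),
      sdMul M (g, α * β) (h, γ * δ)
        = ((sdMul M (g, α) (h, γ)).1,
            (sdMul M (g, α) (h, γ)).2 * (sdMul M (g * M.φ α, β) (h * M.φ γ, δ)).2)) :=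
  ⟨fun _ _ => rfl, M.sdMul_tgt, M.sdMul_one_one, fun g h α γ => M.sdMul_tgt (g, α) (h, γ),
    M.sdMul_interchange⟩
end

section
/- Let G be a group object in the category of groupoids (a strict 2-group). Let G₁ be the group of objects and G₂ the set of arrows with source the identity object e. Then G₂ is a subgroup of the group of all arrows, the map φ : G₂ → G₁ sending an arrow to its target is a group homomorphism, and together with the conjugation action of G₁ on G₂ (α ↦ g⁻¹αg, viewing g as an identity arrow), the data [φ : G₂ → G₁] forms a crossed module. -/
/-- A strict 2-group: a groupoid internal to the category of groups. Both the
objects `Ob` and the arrows `Ar` form groups, and the source, target,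
identity-assigning and composition maps are group homomorphisms (composition
being a homomorphism is the interchange law `comp_hom`). -/
structure Strict2Group (Ob Ar : Type*) [Group Ob] [Group Ar] where
  s : Ar →* Ob
  t : Ar →* Ob
  e : Ob →* Ar
  s_e : ∀ g : Ob, s (e g) = g
  t_e : ∀ g : Ob, t (e g) = g
  /-- composition of arrows (only meaningful on composable pairs) -/
  comp : Ar → Ar → Ar
  s_comp : ∀ f g : Ar, t f = s g → s (comp f g) = s f
  t_comp : ∀ f g : Ar, t f = s g → t (comp f g) = t g
  id_comp : ∀ f : Ar, comp (e (s f)) f = f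
  comp_id : ∀ f : Ar, comp f (e (t f)) = f
  comp_assoc : ∀ f g h : Ar, t f = s g → t g = s h →
    comp (comp f g) h = comp f (comp g h)
  /-- every arrow is invertible -/
  inv' : Ar → Ar
  s_inv : ∀ f : Ar, s (inv' f) = t f
  t_inv : ∀ f : Ar, t (inv' f) = s f
  comp_inv : ∀ f : Ar, comp f (inv' f) = e (s f)
  inv_comp : ∀ f : Ar, comp (inv' f) f = e (t f)
  /-- interchange: composition is a group homomorphism -/
  comp_hom : ∀ f g f' g' : Ar, t f = s g → t f' = s g' →
    comp (f * f') (g * g') = comp f g * comp f' g'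

/-!
Composition of arrows is forced by the interchange law: splitting a composable pair `f, g`
in two ways as products of composable pairs involving identities gives
`comp f g = f * (e (t f))⁻¹ * g = g * (e (s g))⁻¹ * f`. Applied to `f = α` and
`g = β * e (t α)` with `β ∈ ker s`, the equality of the two expressions is exactly the
Peiffer identity CM1; everything else only uses that `s`, `t`, `e` are homomorphisms.
-/

namespace Strict2Group

variable {Ob Ar : Type*} [Group Ob] [Group Ar] (G : Strict2Group Ob Ar)

theorem one_comp {f : Ar} (hf : G.s f = 1) : G.comp 1 f = f := by
  simpa [hf] using G.id_comp f

theorem comp_one {f : Ar} (hf : G.t f = 1) : G.comp f 1 = f := by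
  simpa [hf] using G.comp_id f

theorem comp_eq_mul_inv_mul {f g : Ar} (h : G.t f = G.s g) :
    G.comp f g = f * (G.e (G.t f))⁻¹ * g := by
  have hsplit : G.comp f g = G.comp (f * (G.e (G.t f))⁻¹ * G.e (G.t f)) (1 * g) := by
    rw [inv_mul_cancel_right, one_mul]
  rw [hsplit, G.comp_hom _ _ _ _ (by simp [G.t_e]) (by simp [G.t_e, h]),
    G.comp_one (by simp [G.t_e]), h, G.id_comp, mul_assoc]

theorem comp_eq_mul_inv_mul' {f g : Ar} (h : G.t f = G.s g) :
    G.comp f g = g * (G.e (G.s g))⁻¹ * f := by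
  have hsplit : G.comp f g = G.comp (1 * f) (g * (G.e (G.s g))⁻¹ * G.e (G.s g)) := by
    rw [inv_mul_cancel_right, one_mul]
  rw [hsplit, G.comp_hom _ _ _ _ (by simp [G.s_e]) (by simp [G.s_e, h]),
    G.one_comp (by simp [G.s_e]), ← h, G.comp_id, mul_assoc]

theorem mul_inv_mul_comm {f g : Ar} (h : G.t f = G.s g) :
    f * (G.e (G.t f))⁻¹ * g = g * (G.e (G.s g))⁻¹ * f := by
  rw [← G.comp_eq_mul_inv_mul h, G.comp_eq_mul_inv_mul' h]

theorem conj_e_t_eq_conj (α : Ar) {β : Ar} (hβ : β ∈ G.s.ker) :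
    (G.e (G.t α))⁻¹ * β * G.e (G.t α) = α⁻¹ * β * α := by
  have hcomm := G.mul_inv_mul_comm (f := α) (g := β * G.e (G.t α))
    (by simp [G.s.mem_ker.mp hβ, G.s_e])
  simp only [map_mul, G.s.mem_ker.mp hβ, G.s_e, one_mul, mul_inv_cancel_right] at hcomm
  calc (G.e (G.t α))⁻¹ * β * G.e (G.t α)
      = α⁻¹ * (α * (G.e (G.t α))⁻¹ * (β * G.e (G.t α))) := by group
    _ = α⁻¹ * β * α := by rw [hcomm, mul_assoc]

end Strict2Group

/-- for a strict 2-group `G`, let `G₁ = Ob` (the group of objects)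
and `G₂ = ker s` (the arrows with source the identity object `1`). Then `G₂` is a
subgroup of the group of arrows, the target map `φ = t` restricts to a group
homomorphism `G₂ → G₁`, and together with the conjugation action
`α^g = (e g)⁻¹ α (e g)` the data `[φ : G₂ → G₁]` forms a crossed module. -/
theorem strict2Group_toCrossedModule {Ob Ar : Type*} [Group Ob] [Group Ar]
    (G : Strict2Group Ob Ar) :
    -- G₂ = ker s is a subgroup (closure under multiplication, identity, inverses)
    ((1 : Ar) ∈ G.s.ker ∧ (∀ α β : Ar, α ∈ G.s.ker → β ∈ G.s.ker → α * β ∈ G.s.ker) ∧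
      (∀ α : Ar, α ∈ G.s.ker → α⁻¹ ∈ G.s.ker)) ∧
    -- φ = t restricted to ker s is a group homomorphism (restriction of the hom t)
    (∀ α β : Ar, G.t (α * β) = G.t α * G.t β) ∧
    -- the conjugation action preserves G₂ = ker s
    (∀ (β : Ar) (g : Ob), β ∈ G.s.ker → (G.e g)⁻¹ * β * G.e g ∈ G.s.ker) ∧
    -- it is a right action by group automorphisms
    (∀ β : Ar, (G.e (1 : Ob))⁻¹ * β * G.e (1 : Ob) = β) ∧
    (∀ (β : Ar) (g h : Ob),
      (G.e (g * h))⁻¹ * β * G.e (g * h) = (G.e h)⁻¹ * ((G.e g)⁻¹ * β * G.e g) * G.e h) ∧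
    (∀ (α β : Ar) (g : Ob),
      (G.e g)⁻¹ * (α * β) * G.e g = ((G.e g)⁻¹ * α * G.e g) * ((G.e g)⁻¹ * β * G.e g)) ∧
    -- CM1: β^{φ α} = α⁻¹ β α for α, β ∈ G₂
    (∀ α β : Ar, α ∈ G.s.ker → β ∈ G.s.ker →
      (G.e (G.t α))⁻¹ * β * G.e (G.t α) = α⁻¹ * β * α) ∧
    -- CM2: φ(β^g) = g⁻¹ (φ β) g
    (∀ (β : Ar) (g : Ob), β ∈ G.s.ker →
      G.t ((G.e g)⁻¹ * β * G.e g) = g⁻¹ * G.t β * g) := by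
  refine ⟨⟨G.s.ker.one_mem, fun _ _ => G.s.ker.mul_mem, fun _ => G.s.ker.inv_mem⟩,
    map_mul G.t, fun β g hβ => ?_, by simp, fun β g h => ?_, fun α β g => by group,
    fun α β _ => G.conj_e_t_eq_conj α, fun β g _ => by simp [G.t_e, mul_assoc]⟩
  · simpa [G.s_e] using (MonoidHom.normal_ker G.s).conj_mem' β hβ (G.e g)
  · simp only [map_mul, mul_inv_rev]
    group
end

section
/- A morphism of crossed modules (f₂, f₁) : [H₂ → H₁] → [G₂ → G₁] such that f₁ and f₂ are both surjective and the induced map H₂ → H₁ ×_{G₁} G₂ is an isomorphism admits the following lifting property: every morphism [K₂ → K₁] → [G₂ → G₁] of crossed modules with K₁ a free group lifts along (f₂, f₁). In particular, a crossed module [G₂ → G₁] with G₁ free admits a section for every such 'trivial fibration' onto it. -/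
/-- a morphism of crossed modules `(f₂, f₁) : [H₂ → H₁] → [G₂ → G₁]`
with `f₁`, `f₂` surjective and with the induced map `H₂ → H₁ ×_{G₁} G₂` an
isomorphism (a trivial fibration) has the lifting property against crossed
modules `[K₂ → K₁]` with `K₁` a free group: every morphism
`[K₂ → K₁] → [G₂ → G₁]` lifts along `(f₂, f₁)`.  In particular a crossed module
`[G₂ → G₁]` with `G₁` free admits a section of every such trivial fibration
onto it (take `K = G` and the identity morphism). -/
theorem crossedModule_trivialFibration_lifting
    {K₁ K₂ H₁ H₂ G₁ G₂ : Type*}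
    [Group K₁] [Group K₂] [Group H₁] [Group H₂] [Group G₁] [Group G₂]
    (K : CrossedModule K₁ K₂) (H : CrossedModule H₁ H₂) (G : CrossedModule G₁ G₂)
    [IsFreeGroup K₁]
    -- a morphism k = (k₂, k₁) : K → G of crossed modules
    (k₁ : K₁ →* G₁) (k₂ : K₂ →* G₂)
    (hk : ∀ α : K₂, G.φ (k₂ α) = k₁ (K.φ α))
    (hkact : ∀ (α : K₂) (g : K₁), k₂ (K.act α g) = G.act (k₂ α) (k₁ g))
    -- a morphism f = (f₂, f₁) : H → G of crossed modules ...
    (f₁ : H₁ →* G₁) (f₂ : H₂ →* G₂)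
    (hf : ∀ α : H₂, G.φ (f₂ α) = f₁ (H.φ α))
    (hfact : ∀ (α : H₂) (g : H₁), f₂ (H.act α g) = G.act (f₂ α) (f₁ g))
    -- ... which is a trivial fibration: f₁, f₂ surjective and
    -- H₂ → H₁ ×_{G₁} G₂ an isomorphism
    (hsurj₁ : Function.Surjective f₁) (hsurj₂ : Function.Surjective f₂)
    (hpb : ∀ (x : H₁) (γ : G₂), f₁ x = G.φ γ →
      ∃! β : H₂, H.φ β = x ∧ f₂ β = γ) :
    -- there is a lift l = (l₂, l₁) : K → H with f ∘ l = k
    ∃ (l₁ : K₁ →* H₁) (l₂ : K₂ →* H₂),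
      (∀ α : K₂, H.φ (l₂ α) = l₁ (K.φ α)) ∧
      (∀ (α : K₂) (g : K₁), l₂ (K.act α g) = H.act (l₂ α) (l₁ g)) ∧
      (∀ g : K₁, f₁ (l₁ g) = k₁ g) ∧
      (∀ α : K₂, f₂ (l₂ α) = k₂ α) := by
    -- Step 1: lift k₁ through f₁ using freeness of K₁
  classical
  set s : IsFreeGroup.Generators K₁ → H₁ :=
    fun a => (hsurj₁ (k₁ (IsFreeGroup.of a))).choose with hs
  set l₁ : K₁ →* H₁ := IsFreeGroup.lift s with hl₁
  have hfl₁ : ∀ g : K₁, f₁ (l₁ g) = k₁ g := by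
    intro g
    have : f₁.comp l₁ = k₁ := by
      apply IsFreeGroup.ext_hom
      intro a
      simp only [MonoidHom.comp_apply, hl₁, IsFreeGroup.lift_of, hs]
      exact (hsurj₁ (k₁ (IsFreeGroup.of a))).choose_spec
    exact DFunLike.congr_fun this g
  -- Step 2: define l₂ via the pullback property
  have hcond : ∀ α : K₂, f₁ (l₁ (K.φ α)) = G.φ (k₂ α) := fun α => by
    rw [hfl₁, hk]
  set l₂f : K₂ → H₂ := fun α => (hpb _ _ (hcond α)).choose with hl₂f
  have hl₂spec : ∀ α : K₂, H.φ (l₂f α) = l₁ (K.φ α) ∧ f₂ (l₂f α) = k₂ α :=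
    fun α => (hpb _ _ (hcond α)).choose_spec.1
  have huniq : ∀ (α : K₂) (β : H₂),
      H.φ β = l₁ (K.φ α) → f₂ β = k₂ α → β = l₂f α := fun α β h1 h2 =>
    (hpb _ _ (hcond α)).choose_spec.2 β ⟨h1, h2⟩
  have hmul : ∀ α β : K₂, l₂f (α * β) = l₂f α * l₂f β := by
    intro α β
    refine (huniq _ _ ?_ ?_).symm
    · rw [map_mul, (hl₂spec α).1, (hl₂spec β).1, map_mul, map_mul]
    · rw [map_mul, (hl₂spec α).2, (hl₂spec β).2, map_mul]
  set l₂ : K₂ →* H₂ :=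
    { toFun := l₂f
      map_one' := by
        refine (huniq 1 1 ?_ ?_).symm <;> simp
      map_mul' := hmul } with hl₂def
  refine ⟨l₁, l₂, fun α => (hl₂spec α).1, ?_, hfl₁, fun α => (hl₂spec α).2⟩
  intro α g
  show l₂f (K.act α g) = H.act (l₂f α) (l₁ g)
  refine (huniq _ _ ?_ ?_).symm
  · rw [H.cm2, (hl₂spec α).1, K.cm2, map_mul, map_mul, map_inv]
  · rw [hfact, (hl₂spec α).2, hfl₁, hkact]
end

section
/- Let (f₂, f₁) : [H₂ → H₁] → [G₂ → G₁] be a morphism of crossed modules with f₁, f₂ surjective and H₂ ≅ H₁ ×_{G₁} G₂ via (ψ, f₂). If G₁ is a free group, then there exists a section (s₂, s₁) : [G₂ → G₁] → [H₂ → H₁] of (f₂, f₁) as a morphism of crossed modules; explicitly, if s₁ : G₁ → H₁ is a group-theoretic section of f₁ (which exists by freeness), then s₂(α) = (s₁(φ(α)), α) defines a compatible section. -/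
/-- let `(f₂, f₁) : [H₂ → H₁] → [G₂ → G₁]` be a morphism of crossed
modules with `f₁`, `f₂` surjective and `H₂ ≅ H₁ ×_{G₁} G₂` via `(ψ, f₂)`.  If
`G₁` is free then `f₁` admits a group-theoretic section `s₁ : G₁ → H₁`, and any
such `s₁` extends to a section `(s₂, s₁)` of `(f₂, f₁)` as a morphism of crossed
modules, where `s₂ α` corresponds to `(s₁ (φ α), α)` under the isomorphism
`H₂ ≅ H₁ ×_{G₁} G₂` (i.e. `ψ (s₂ α) = s₁ (φ α)` and `f₂ (s₂ α) = α`). -/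
theorem crossedModule_free_section
    {H₁ H₂ G₁ G₂ : Type*} [Group H₁] [Group H₂] [Group G₁] [Group G₂]
    (H : CrossedModule H₁ H₂) (G : CrossedModule G₁ G₂)
    [IsFreeGroup G₁]
    (f₁ : H₁ →* G₁) (f₂ : H₂ →* G₂)
    (hf : ∀ α : H₂, G.φ (f₂ α) = f₁ (H.φ α))
    (hfact : ∀ (α : H₂) (g : H₁), f₂ (H.act α g) = G.act (f₂ α) (f₁ g))
    (hsurj₁ : Function.Surjective f₁) (hsurj₂ : Function.Surjective f₂)
    (hpb : ∀ (x : H₁) (γ : G₂), f₁ x = G.φ γ →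
      ∃! β : H₂, H.φ β = x ∧ f₂ β = γ) :
    -- a group-theoretic section s₁ of f₁ exists by freeness of G₁ ...
    (∃ s₁ : G₁ →* H₁, ∀ g : G₁, f₁ (s₁ g) = g) ∧
    -- ... and every such s₁ extends to a section (s₂, s₁) of crossed modules
    (∀ s₁ : G₁ →* H₁, (∀ g : G₁, f₁ (s₁ g) = g) →
      ∃ s₂ : G₂ →* H₂,
        (∀ α : G₂, H.φ (s₂ α) = s₁ (G.φ α)) ∧
        (∀ α : G₂, f₂ (s₂ α) = α) ∧
        (∀ (α : G₂) (g : G₁), s₂ (G.act α g) = H.act (s₂ α) (s₁ g))) := by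
  constructor
  · -- section of f₁ by freeness
    let gen : IsFreeGroup.Generators G₁ → H₁ :=
      fun x => (hsurj₁ (IsFreeGroup.of x)).choose
    refine ⟨IsFreeGroup.lift gen, ?_⟩
    have h : f₁.comp (IsFreeGroup.lift gen) = MonoidHom.id G₁ := by
      apply IsFreeGroup.ext_hom
      intro x
      simp [gen, (hsurj₁ (IsFreeGroup.of x)).choose_spec]
    intro g
    exact DFunLike.congr_fun h g
  · intro s₁ hs₁
    have key : ∀ α : G₂, ∃! β : H₂, H.φ β = s₁ (G.φ α) ∧ f₂ β = α :=
      fun α => hpb _ _ (hs₁ _)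
    let t : G₂ → H₂ := fun α => (key α).choose
    have ht : ∀ α, H.φ (t α) = s₁ (G.φ α) ∧ f₂ (t α) = α :=
      fun α => (key α).choose_spec.1
    have huniq : ∀ (α : G₂) (β : H₂), H.φ β = s₁ (G.φ α) → f₂ β = α → β = t α :=
      fun α β h1 h2 => (key α).choose_spec.2 β ⟨h1, h2⟩
    refine ⟨{ toFun := t
              map_one' := (huniq 1 1 (by simp) (by simp)).symm
              map_mul' := fun a b => (huniq (a * b) (t a * t b)
                (by simp [(ht a).1, (ht b).1])
                (by simp [(ht a).2, (ht b).2])).symm },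
      fun α => (ht α).1, fun α => (ht α).2, ?_⟩
    intro α g
    refine (huniq (G.act α g) (H.act (t α) (s₁ g)) ?_ ?_).symm
    · rw [H.cm2, (ht α).1, G.cm2]
      simp
    · rw [hfact, (ht α).2, hs₁]
end

section
/- For any crossed module [G₂ → G₁], choosing a surjection F₁ → G₁ from a free group F₁ and setting F₂ = F₁ ×_{G₁} G₂ yields a crossed module [F₂ → F₁] (with the action of F₁ on F₂ induced via F₁ → G₁), and the natural projection [F₂ → F₁] → [G₂ → G₁] has both components surjective and induces an isomorphism F₂ ≅ F₁ ×_{G₁} G₂; moreover this morphism induces isomorphisms on π₁ and π₂. -/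
/-- for any crossed module `[G₂ → G₁]`, a surjection `p : F₁ → G₁`
from a free group `F₁` yields a crossed module `[F₂ → F₁]` on the fiber product
`F₂ = F₁ ×_{G₁} G₂ = {(f, α) | p f = φ α}` (structure map the first projection,
action `(f, α)^{f'} = (f'⁻¹ f f', α^{p f'})`), and the natural projection
`(snd, p) : [F₂ → F₁] → [G₂ → G₁]` has both components surjective, tautologically
identifies `F₂` with `F₁ ×_{G₁} G₂`, and induces isomorphisms on `π₁` and `π₂`. -/
theorem crossedModule_cofibrant_replacement
    {F₁ G₁ G₂ : Type*} [Group F₁] [Group G₁] [Group G₂]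
    (G : CrossedModule G₁ G₂) [IsFreeGroup F₁]
    (p : F₁ →* G₁) (hp : Function.Surjective p) :
    -- P is the fiber product F₂ = F₁ ×_{G₁} G₂ inside F₁ × G₂
    ∀ P : F₁ × G₂ → Prop, (P = fun x => p x.1 = G.φ x.2) →
    -- F₂ is a subgroup of F₁ × G₂
    (P 1 ∧ (∀ x y, P x → P y → P (x * y)) ∧ (∀ x, P x → P x⁻¹)) ∧
    -- the action (f, α)^{f'} = (f'⁻¹ f f', α^{p f'}) preserves F₂ ...
    (∀ x (f' : F₁), P x → P (f'⁻¹ * x.1 * f', G.act x.2 (p f'))) ∧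
    -- ... and is a right action:
    (∀ x, P x → ((1 : F₁)⁻¹ * x.1 * 1, G.act x.2 (p 1)) = x) ∧
    (∀ x (f f' : F₁), P x →
      G.act x.2 (p (f * f')) = G.act (G.act x.2 (p f)) (p f')) ∧
    -- CM1 for [F₂ → F₁] (first components agree trivially; second components):
    (∀ x y, P x → P y → G.act y.2 (p x.1) = x.2⁻¹ * y.2 * x.2) ∧
    -- CM2 for [F₂ → F₁] (the structure map is the first projection):
    (∀ x (f' : F₁), P x →
      (f'⁻¹ * x.1 * f', G.act x.2 (p f')).1 = f'⁻¹ * x.1 * f') ∧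
    -- both components of the projection (snd, p) are surjective:
    (∀ γ : G₂, ∃ x, P x ∧ x.2 = γ) ∧ Function.Surjective p ∧
    -- the projection induces an isomorphism on π₂ = ker:
    (∀ x, P x → x.1 = 1 → G.φ x.2 = 1) ∧
    (∀ γ : G₂, G.φ γ = 1 → ∃ x, P x ∧ x.1 = 1 ∧ x.2 = γ) ∧
    (∀ x y, P x → P y → x.1 = 1 → y.1 = 1 → x.2 = y.2 → x = y) ∧
    -- the projection induces an isomorphism on π₁ = coker:
    (∀ g : G₁, ∃ (f : F₁) (γ : G₂), g = p f * G.φ γ) ∧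
    (∀ f f' : F₁, (∃ γ : G₂, p f' = p f * G.φ γ) →
      ∃ x, P x ∧ f' = f * x.1) := by
  intro P hP
  subst hP
  refine ⟨⟨by simp, ?_, ?_⟩, ?_, ?_, ?_, ?_, ?_, ?_, hp, ?_, ?_, ?_, ?_, ?_⟩
  · intro x y hx hy
    simp only [Prod.fst_mul, Prod.snd_mul, map_mul, hx, hy]
  · intro x hx
    simp only [Prod.fst_inv, Prod.snd_inv, map_inv, hx]
  · intro x f' hx
    simp only [map_mul, map_inv, hx, G.cm2]
  · intro x hx
    simp only [map_one, G.act_one, inv_one, one_mul, mul_one]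
  · intro x f f' _
    simp only [map_mul, G.act_mul]
  · intro x y hx hy
    rw [hx, G.cm1]
  · intro x f' _
    rfl
  · intro γ
    obtain ⟨f, hf⟩ := hp (G.φ γ)
    exact ⟨(f, γ), hf, rfl⟩
  · intro x hx h1
    rw [← hx, h1, map_one]
  · intro γ hγ
    exact ⟨(1, γ), by simp [hγ], rfl, rfl⟩
  · intro x y _ _ h1 h2 h3
    exact Prod.ext (h1.trans h2.symm) h3
  · intro g
    obtain ⟨f, hf⟩ := hp g
    exact ⟨f, 1, by simp [hf]⟩
  · intro f f' ⟨γ, hγ⟩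
    refine ⟨(f⁻¹ * f', γ), ?_, by group⟩
    simp [hγ]
end
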